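/- In the logistic setting, suppose θ* minimizes the risk L. For any ε > 0 and any θ ∈ ℝ^d: if ‖θ − θ*‖ > ε, then L(θ) − L(θ*) > Λ_min·ε² / ( 4·(1 + e^{D_X(‖θ*‖ + ε)}) ). -/

import Mathlib

/-! Along the ray `a ↦ θ* + a • (θ - θ*)` the risk is convex. For `a ∈ [0, T]`,
`T = ε / ‖θ - θ*‖ < 1`, every margin `y θᵀX` lies in `[-M, M]` with `M = D_X (‖θ*‖ + ε)`, where
the logistic loss has curvature `σ (1 - σ) ≥ σ(-M) / 2 = 1 / (2 (1 + e^M))`. So the risk is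
strongly convex on that segment with modulus `σ(-M) / 2 · E[((θ - θ*)ᵀX)²]`, and the second moment
is at least `Λ_min ‖θ - θ*‖²`. As the segment starts at the minimiser, the risk at its endpoint
exceeds `L(θ*)` by at least `Λ_min ε² / (4 (1 + e^M)) > 0`, and convexity beyond the endpoint
passes this gap on to `θ`, strictly because `T < 1`. -/

open MeasureTheory ProbabilityTheory Matrix Real
open scoped ENNReal

/-- The smallest eigenvalue of a (symmetric) matrix. -/
noncomputable def lambdaMin {d : ℕ} (M : Matrix (Fin d) (Fin d) ℝ) : ℝ :=
  sInf {r : ℝ | ∃ v : Fin d → ℝ, v ≠ 0 ∧ M.mulVec v = r • v}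

/-- The Euclidean norm of a vector of `Fin d → ℝ`. -/
noncomputable def euclNorm {d : ℕ} (v : Fin d → ℝ) : ℝ :=
  Real.sqrt (∑ i, v i ^ 2)

open Set Filter Topology

noncomputable def logisticLoss (s : ℝ) : ℝ := Real.log (1 + Real.exp (-s))

theorem logisticLoss_nonneg (s : ℝ) : 0 ≤ logisticLoss s :=
  Real.log_nonneg (by linarith [Real.exp_pos (-s)])

theorem logisticLoss_le_log_two_add_abs (s : ℝ) : logisticLoss s ≤ Real.log 2 + |s| := by
  have h : 1 + Real.exp (-s) ≤ 2 * Real.exp |s| := by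
    have h1 : 1 ≤ Real.exp |s| := Real.one_le_exp (abs_nonneg s)
    have h2 : Real.exp (-s) ≤ Real.exp |s| := Real.exp_le_exp.2 (neg_le_abs s)
    linarith
  calc logisticLoss s ≤ Real.log (2 * Real.exp |s|) := Real.log_le_log (by positivity) h
    _ = Real.log 2 + |s| := by rw [Real.log_mul two_ne_zero (Real.exp_ne_zero _), Real.log_exp]

theorem hasDerivAt_logisticLoss (s : ℝ) : HasDerivAt logisticLoss (sigmoid s - 1) s := by
  refine (((hasDerivAt_neg' s).exp.const_add 1).log (by positivity)).congr_deriv ?_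
  rw [sigmoid_def]
  field_simp
  ring

theorem continuous_logisticLoss : Continuous logisticLoss :=
  continuous_iff_continuousAt.2 fun s => (hasDerivAt_logisticLoss s).continuousAt

/-- The second derivative `σ (1 - σ) = σ(s) σ(-s)` is the product of two numbers at least
`σ(-M)`, one of which is at least `1/2`. -/
theorem sigmoid_neg_le_two_mul_sigmoid_mul_one_sub {M s : ℝ} (hs : |s| ≤ M) :
    sigmoid (-M) ≤ 2 * (sigmoid s * (1 - sigmoid s)) := by
  have h1 : sigmoid (-M) ≤ sigmoid s := sigmoid_le (neg_le_of_abs_le hs)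
  have h2 : sigmoid (-M) ≤ 1 - sigmoid s := by
    rw [← sigmoid_neg]; exact sigmoid_le (neg_le_neg (le_of_abs_le hs))
  rcases le_total (sigmoid s) 2⁻¹ with h | h <;> nlinarith [sigmoid_pos (-M)]

theorem strongConvexOn_logisticLoss {D : Set ℝ} (hD : Convex ℝ D) {m : ℝ}
    (hm : ∀ s ∈ interior D, m ≤ sigmoid s * (1 - sigmoid s)) :
    StrongConvexOn D m logisticLoss := by
  rw [strongConvexOn_iff_convex]
  refine convexOn_of_hasDerivWithinAt2_nonneg hD
    (f' := fun s => sigmoid s - 1 - m * s) (f'' := fun s => sigmoid s * (1 - sigmoid s) - m)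
    (continuous_logisticLoss.sub (by fun_prop)).continuousOn
    (fun s _ => ?_) (fun s _ => ?_) (fun s hs => sub_nonneg.2 (hm s hs))
  · simp only [Real.norm_eq_abs, sq_abs]
    refine ((hasDerivAt_logisticLoss s).sub ?_).hasDerivWithinAt
    exact ((hasDerivAt_pow 2 s).const_mul (m / 2)).congr_deriv (by ring)
  · refine (((hasDerivAt_sigmoid s).sub_const 1).sub ?_).hasDerivWithinAt
    simpa using (hasDerivAt_id s).const_mul m

theorem StrongConvexOn.comp_add_mul {S s : Set ℝ} {m : ℝ} {φ : ℝ → ℝ}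
    (hφ : StrongConvexOn S m φ) (hs : Convex ℝ s) (b t : ℝ) (hmaps : ∀ a ∈ s, b + a * t ∈ S) :
    StrongConvexOn s (m * t ^ 2) fun a => φ (b + a * t) := by
  refine ⟨hs, fun x hx x' hx' a a' ha ha' haa => ?_⟩
  have h := hφ.2 (hmaps x hx) (hmaps x' hx') ha ha' haa
  have harg : b + (a * x + a' * x') * t = a * (b + x * t) + a' * (b + x' * t) := by
    linear_combination (-b) * haa
  simp only [smul_eq_mul, Real.norm_eq_abs, sq_abs] at h ⊢
  rw [harg]
  convert h using 2
  ring

theorem StrongConvexOn.add_sq_le_of_isMinOn {E : Type*} [NormedAddCommGroup E] [NormedSpace ℝ E]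
    {s : Set E} {m : ℝ} {f : E → ℝ} {x₀ x : E} (hf : StrongConvexOn s m f)
    (hmin : IsMinOn f s x₀) (hx₀ : x₀ ∈ s) (hx : x ∈ s) :
    f x₀ + m / 2 * ‖x - x₀‖ ^ 2 ≤ f x := by
  have hslope : ∀ a ∈ Ioo (0 : ℝ) 1, (1 - a) * (m / 2 * ‖x - x₀‖ ^ 2) ≤ f x - f x₀ := by
    rintro a ⟨ha0, ha1⟩
    have hconv := hf.2 hx hx₀ ha0.le (sub_nonneg.2 ha1.le) (add_sub_cancel a 1)
    have hle : f x₀ ≤ _ := hmin (hf.1 hx hx₀ ha0.le (sub_nonneg.2 ha1.le) (add_sub_cancel a 1))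
    simp only [smul_eq_mul] at hconv
    refine le_of_mul_le_mul_left ?_ ha0
    linear_combination hle + hconv
  have hlim : Tendsto (fun a => (1 - a) * (m / 2 * ‖x - x₀‖ ^ 2)) (𝓝[>] 0)
      (𝓝 (m / 2 * ‖x - x₀‖ ^ 2)) := by
    have : Continuous fun a : ℝ => (1 - a) * (m / 2 * ‖x - x₀‖ ^ 2) := by fun_prop
    simpa using (this.tendsto 0).mono_left nhdsWithin_le_nhds
  have := le_of_tendsto hlim (eventually_of_mem (Ioo_mem_nhdsGT one_pos) hslope)
  linarith

theorem strongConvexOn_integral {Ω E : Type*} [MeasurableSpace Ω] {μ : Measure Ω}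
    [NormedAddCommGroup E] [NormedSpace ℝ E] {s : Set E} {m : Ω → ℝ} {f : Ω → E → ℝ}
    (hs : Convex ℝ s) (hf : ∀ᵐ ω ∂μ, StrongConvexOn s (m ω) (f ω))
    (hfi : ∀ x ∈ s, Integrable (fun ω => f ω x) μ) (hm : Integrable m μ) :
    StrongConvexOn s (∫ ω, m ω ∂μ) fun x => ∫ ω, f ω x ∂μ := by
  refine ⟨hs, fun x hx x' hx' a b ha hb hab => ?_⟩
  have hfa := (hfi x hx).const_mul a
  have hfb := (hfi x' hx').const_mul b
  have hfab : Integrable (fun ω => a * f ω x + b * f ω x') μ := hfa.add hfb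
  have hma := ((hm.div_const 2).mul_const (‖x - x'‖ ^ 2)).const_mul (a * b)
  have hrhs : Integrable (fun ω => a * f ω x + b * f ω x' - a * b * (m ω / 2 * ‖x - x'‖ ^ 2)) μ :=
    hfab.sub hma
  have h := integral_mono_ae (hfi _ (hs hx hx' ha hb hab)) hrhs
    (hf.mono fun ω hω => hω.2 hx hx' ha hb hab)
  simp only [smul_eq_mul] at h ⊢
  rwa [integral_sub hfab hma, integral_add hfa hfb, integral_const_mul,
    integral_const_mul, integral_const_mul, integral_mul_const, integral_div] at h

theorem euclNorm_eq_norm_toLp {d : ℕ} (v : Fin d → ℝ) : euclNorm v = ‖WithLp.toLp 2 v‖ := by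
  simp [euclNorm, EuclideanSpace.norm_eq]

theorem euclNorm_nonneg {d : ℕ} (v : Fin d → ℝ) : 0 ≤ euclNorm v := Real.sqrt_nonneg _

theorem euclNorm_sq {d : ℕ} (v : Fin d → ℝ) : euclNorm v ^ 2 = ∑ i, v i ^ 2 :=
  Real.sq_sqrt (by positivity)

theorem euclNorm_add_le {d : ℕ} (v w : Fin d → ℝ) : euclNorm (v + w) ≤ euclNorm v + euclNorm w := by
  simpa only [euclNorm_eq_norm_toLp, WithLp.toLp_add] using norm_add_le _ _

theorem euclNorm_smul {d : ℕ} (t : ℝ) (v : Fin d → ℝ) : euclNorm (t • v) = |t| * euclNorm v := by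
  simp only [euclNorm_eq_norm_toLp, WithLp.toLp_smul, norm_smul, Real.norm_eq_abs]

theorem abs_dotProduct_le_euclNorm_mul {d : ℕ} (v w : Fin d → ℝ) :
    |v ⬝ᵥ w| ≤ euclNorm v * euclNorm w := by
  simpa [euclNorm_eq_norm_toLp, EuclideanSpace.inner_toLp_toLp, dotProduct_comm] using
    abs_real_inner_le_norm (WithLp.toLp 2 v) (WithLp.toLp 2 w)

theorem abs_apply_le_euclNorm {d : ℕ} (v : Fin d → ℝ) (i : Fin d) : |v i| ≤ euclNorm v := by
  simpa [euclNorm_eq_norm_toLp] using PiLp.norm_apply_le (WithLp.toLp 2 v) i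

theorem lambdaMin_eq_sInf_spectrum {d : ℕ} (M : Matrix (Fin d) (Fin d) ℝ) :
    lambdaMin M = sInf (spectrum ℝ M) := by
  rw [lambdaMin]
  congr 1
  ext r
  rw [← Matrix.spectrum_toLin', ← Module.End.hasEigenvalue_iff_mem_spectrum,
    Module.End.hasEigenvalue_iff, Submodule.ne_bot_iff]
  simp [and_comm]

theorem lambdaMin_le_of_mem_spectrum {d : ℕ} {M : Matrix (Fin d) (Fin d) ℝ} {r : ℝ}
    (hr : r ∈ spectrum ℝ M) : lambdaMin M ≤ r := by
  rw [lambdaMin_eq_sInf_spectrum]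
  exact csInf_le (Matrix.finite_real_spectrum (A := M)).bddBelow hr

open scoped MatrixOrder in
theorem lambdaMin_mul_sum_sq_le {d : ℕ} {M : Matrix (Fin d) (Fin d) ℝ} (hM : M.IsHermitian)
    (v : Fin d → ℝ) : lambdaMin M * ∑ i, v i ^ 2 ≤ v ⬝ᵥ M *ᵥ v := by
  have hle : algebraMap ℝ _ (lambdaMin M) ≤ M :=
    (algebraMap_le_iff_le_spectrum hM.isSelfAdjoint).2 fun _ => lambdaMin_le_of_mem_spectrum
  have h := (Matrix.le_iff.1 hle).dotProduct_mulVec_nonneg v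
  simp only [star_trivial, Matrix.sub_mulVec, dotProduct_sub, sub_nonneg,
    Algebra.algebraMap_eq_smul_one, Matrix.smul_mulVec, Matrix.one_mulVec, dotProduct_smul,
    smul_eq_mul] at h
  simpa [dotProduct, sq] using h

section Risk

variable {Ω : Type*} [MeasurableSpace Ω] {μ : Measure Ω} {d : ℕ} {X : Ω → Fin d → ℝ}
  {y : Ω → ℝ} {DX : ℝ}

variable (μ X) in
noncomputable def secondMoment : Matrix (Fin d) (Fin d) ℝ :=
  Matrix.of fun i j => ∫ ω, X ω i * X ω j ∂μ

theorem isHermitian_secondMoment : (secondMoment μ X).IsHermitian := by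
  ext i j
  simp [secondMoment, mul_comm]

theorem integrable_mul_apply [IsFiniteMeasure μ] (hXmeas : Measurable X)
    (hXbdd : ∀ᵐ ω ∂μ, euclNorm (X ω) ≤ DX) (i j : Fin d) :
    Integrable (fun ω => X ω i * X ω j) μ := by
  refine Integrable.of_bound (by fun_prop) (DX * DX) (hXbdd.mono fun ω hω => ?_)
  have hi := (abs_apply_le_euclNorm (X ω) i).trans hω
  have hj := (abs_apply_le_euclNorm (X ω) j).trans hω
  rw [Real.norm_eq_abs, abs_mul]
  exact mul_le_mul hi hj (abs_nonneg _) ((abs_nonneg _).trans hi)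

theorem dotProduct_sq_eq_sum (v x : Fin d → ℝ) :
    (v ⬝ᵥ x) ^ 2 = ∑ i, ∑ j, v i * v j * (x i * x j) := by
  rw [sq, dotProduct, Finset.sum_mul_sum]
  exact Finset.sum_congr rfl fun i _ => Finset.sum_congr rfl fun j _ => by ring

theorem integrable_dotProduct_sq (hX : ∀ i j, Integrable (fun ω => X ω i * X ω j) μ)
    (v : Fin d → ℝ) : Integrable (fun ω => (v ⬝ᵥ X ω) ^ 2) μ := by
  simp_rw [dotProduct_sq_eq_sum]
  exact integrable_finsetSum _ fun i _ => integrable_finsetSum _ fun j _ =>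
    (hX i j).const_mul _

theorem integral_dotProduct_sq (hX : ∀ i j, Integrable (fun ω => X ω i * X ω j) μ)
    (v : Fin d → ℝ) : ∫ ω, (v ⬝ᵥ X ω) ^ 2 ∂μ = v ⬝ᵥ secondMoment μ X *ᵥ v := by
  simp_rw [dotProduct_sq_eq_sum]
  rw [integral_finsetSum _ fun i _ => integrable_finsetSum _ fun j _ => (hX i j).const_mul _]
  simp_rw [integral_finsetSum _ fun j _ => (hX _ j).const_mul _, integral_const_mul]
  simp only [dotProduct, Matrix.mulVec, secondMoment, Matrix.of_apply, Finset.mul_sum]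
  exact Finset.sum_congr rfl fun i _ => Finset.sum_congr rfl fun j _ => by ring

theorem lambdaMin_secondMoment_mul_euclNorm_sq_le
    (hX : ∀ i j, Integrable (fun ω => X ω i * X ω j) μ) (v : Fin d → ℝ) :
    lambdaMin (secondMoment μ X) * euclNorm v ^ 2 ≤ ∫ ω, (v ⬝ᵥ X ω) ^ 2 ∂μ := by
  rw [euclNorm_sq, integral_dotProduct_sq hX]
  exact lambdaMin_mul_sum_sq_le isHermitian_secondMoment v

variable (μ X y) in
noncomputable def logisticRisk (θ : Fin d → ℝ) : ℝ :=
  ∫ ω, logisticLoss (y ω * (θ ⬝ᵥ X ω)) ∂μ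

theorem ae_forall_abs_mul_dotProduct_le (hy : ∀ᵐ ω ∂μ, y ω = 1 ∨ y ω = -1)
    (hXbdd : ∀ᵐ ω ∂μ, euclNorm (X ω) ≤ DX) :
    ∀ᵐ ω ∂μ, ∀ θ, |y ω * (θ ⬝ᵥ X ω)| ≤ DX * euclNorm θ := by
  filter_upwards [hy, hXbdd] with ω hyω hXω θ
  have hy1 : |y ω| = 1 := by rcases hyω with h | h <;> simp [h]
  rw [abs_mul, hy1, one_mul, mul_comm DX]
  exact (abs_dotProduct_le_euclNorm_mul θ (X ω)).trans
    (mul_le_mul_of_nonneg_left hXω (euclNorm_nonneg θ))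

theorem integrable_logisticLoss_mul_dotProduct [IsFiniteMeasure μ] (hXmeas : Measurable X)
    (hymeas : Measurable y) (hy : ∀ᵐ ω ∂μ, y ω = 1 ∨ y ω = -1)
    (hXbdd : ∀ᵐ ω ∂μ, euclNorm (X ω) ≤ DX) (θ : Fin d → ℝ) :
    Integrable (fun ω => logisticLoss (y ω * (θ ⬝ᵥ X ω))) μ := by
  refine Integrable.of_bound ?_ (Real.log 2 + DX * euclNorm θ)
    ((ae_forall_abs_mul_dotProduct_le hy hXbdd).mono fun ω hω => ?_)
  · exact (continuous_logisticLoss.measurable.comp (by fun_prop)).aestronglyMeasurable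
  · rw [Real.norm_eq_abs, abs_of_nonneg (logisticLoss_nonneg _)]
    linarith [logisticLoss_le_log_two_add_abs (y ω * (θ ⬝ᵥ X ω)), hω θ]

theorem strongConvexOn_logisticRisk_comp_add_smul [IsFiniteMeasure μ] (hXmeas : Measurable X)
    (hymeas : Measurable y) (hy : ∀ᵐ ω ∂μ, y ω = 1 ∨ y ω = -1)
    (hXbdd : ∀ᵐ ω ∂μ, euclNorm (X ω) ≤ DX) {S s : Set ℝ} {m : ℝ}
    (hφ : StrongConvexOn S m logisticLoss) (hs : Convex ℝ s) (θ₀ v : Fin d → ℝ)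
    (hS : ∀ᵐ ω ∂μ, ∀ a ∈ s, y ω * ((θ₀ + a • v) ⬝ᵥ X ω) ∈ S) :
    StrongConvexOn s (m * ∫ ω, (v ⬝ᵥ X ω) ^ 2 ∂μ) fun a => logisticRisk μ X y (θ₀ + a • v) := by
  rw [← integral_const_mul]
  refine strongConvexOn_integral hs ?_
    (fun a _ => integrable_logisticLoss_mul_dotProduct hXmeas hymeas hy hXbdd _)
    ((integrable_dotProduct_sq (integrable_mul_apply hXmeas hXbdd) v).const_mul m)
  filter_upwards [hy, hS] with ω hyω hSω
  have hy2 : y ω ^ 2 = 1 := by rcases hyω with h | h <;> simp [h]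
  have harg : ∀ a : ℝ, y ω * ((θ₀ + a • v) ⬝ᵥ X ω)
      = y ω * (θ₀ ⬝ᵥ X ω) + a * (y ω * (v ⬝ᵥ X ω)) := fun a => by
    rw [add_dotProduct, smul_dotProduct, smul_eq_mul]; ring
  have h := hφ.comp_add_mul hs _ _ fun a ha => harg a ▸ hSω a ha
  rw [mul_pow, hy2, one_mul] at h
  simpa only [harg] using h

theorem convexOn_logisticRisk_comp_add_smul [IsFiniteMeasure μ] (hXmeas : Measurable X)
    (hymeas : Measurable y) (hy : ∀ᵐ ω ∂μ, y ω = 1 ∨ y ω = -1)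
    (hXbdd : ∀ᵐ ω ∂μ, euclNorm (X ω) ≤ DX) (θ₀ v : Fin d → ℝ) :
    ConvexOn ℝ univ fun a : ℝ => logisticRisk μ X y (θ₀ + a • v) := by
  have hφ : StrongConvexOn (univ : Set ℝ) 0 logisticLoss := strongConvexOn_logisticLoss convex_univ
    fun s _ => mul_nonneg (sigmoid_nonneg s) (sub_nonneg.2 (sigmoid_le_one s))
  simpa using strongConvexOn_logisticRisk_comp_add_smul hXmeas hymeas hy hXbdd hφ convex_univ
    θ₀ v (by simp)

theorem strongConvexOn_logisticRisk_Icc [IsFiniteMeasure μ] (hXmeas : Measurable X)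
    (hymeas : Measurable y) (hy : ∀ᵐ ω ∂μ, y ω = 1 ∨ y ω = -1)
    (hDX : 0 ≤ DX) (hXbdd : ∀ᵐ ω ∂μ, euclNorm (X ω) ≤ DX) (θ₀ v : Fin d → ℝ) (T : ℝ) :
    StrongConvexOn (Icc 0 T) (sigmoid (-(DX * (euclNorm θ₀ + T * euclNorm v))) / 2 *
      ∫ ω, (v ⬝ᵥ X ω) ^ 2 ∂μ) fun a => logisticRisk μ X y (θ₀ + a • v) := by
  set M := DX * (euclNorm θ₀ + T * euclNorm v)
  refine strongConvexOn_logisticRisk_comp_add_smul hXmeas hymeas hy hXbdd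
    (strongConvexOn_logisticLoss (convex_Icc (-M) M) fun s hs => ?_) (convex_Icc 0 T) θ₀ v ?_
  · rw [interior_Icc] at hs
    linarith [sigmoid_neg_le_two_mul_sigmoid_mul_one_sub (abs_le.2 ⟨hs.1.le, hs.2.le⟩)]
  · filter_upwards [ae_forall_abs_mul_dotProduct_le hy hXbdd] with ω hω a ha
    refine abs_le.1 ((hω _).trans ?_)
    calc DX * euclNorm (θ₀ + a • v) ≤ DX * (euclNorm θ₀ + a * euclNorm v) := by
          gcongr
          simpa [euclNorm_smul, abs_of_nonneg ha.1] using euclNorm_add_le θ₀ (a • v)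
      _ ≤ M := mul_le_mul_of_nonneg_left
          (by gcongr; exacts [euclNorm_nonneg v, ha.2]) hDX

end Risk

theorem logistic_excess_risk_lower_bound_general
    {Ω : Type*} [MeasurableSpace Ω] (μ : Measure Ω) [IsProbabilityMeasure μ]
    {d : ℕ}
    (X : Ω → Fin d → ℝ) (y : Ω → ℝ) (hXmeas : Measurable X) (hymeas : Measurable y)
    (hy : ∀ᵐ ω ∂μ, y ω = 1 ∨ y ω = -1)
    (DX : ℝ) (hDX : 0 < DX) (hXbdd : ∀ᵐ ω ∂μ, euclNorm (X ω) ≤ DX)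
    (Λmin : ℝ) (hΛ : Λmin = lambdaMin (Matrix.of fun i j => ∫ ω, X ω i * X ω j ∂μ))
    (hΛpos : 0 < Λmin)
    (L : (Fin d → ℝ) → ℝ)
    (hL : ∀ θ, L θ = ∫ ω, Real.log (1 + Real.exp (-(y ω) * (θ ⬝ᵥ X ω))) ∂μ)
    (θstar : Fin d → ℝ) (hmin : ∀ θ, L θstar ≤ L θ)
    (ε : ℝ) (hε : 0 < ε) (θ : Fin d → ℝ) (hfar : ε < euclNorm (θ - θstar)) :
    Λmin * ε ^ 2 / (4 * (1 + Real.exp (DX * (euclNorm θstar + ε)))) < L θ - L θstar := by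
  set v := θ - θstar
  set T := ε / euclNorm v
  set c := sigmoid (-(DX * (euclNorm θstar + ε)))
  set Q := ∫ ω, (v ⬝ᵥ X ω) ^ 2 ∂μ
  have hR : 0 < euclNorm v := hε.trans hfar
  have hT0 : 0 < T := div_pos hε hR
  have hT1 : T < 1 := (div_lt_one hR).2 hfar
  have hTR : T * euclNorm v = ε := div_mul_cancel₀ ε hR.ne'
  obtain rfl : L = logisticRisk μ X y := funext fun θ => by simp [hL, logisticRisk, logisticLoss]
  set g := fun a : ℝ => logisticRisk μ X y (θstar + a • v)
  have hgap : g 0 + c / 2 * Q / 2 * T ^ 2 ≤ g T := by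
    have hstrong := strongConvexOn_logisticRisk_Icc hXmeas hymeas hy hDX.le hXbdd θstar v T
    rw [hTR] at hstrong
    have h := hstrong.add_sq_le_of_isMinOn (x₀ := 0) (x := T)
      (fun a _ => by simpa [g] using hmin _) (left_mem_Icc.2 hT0.le) (right_mem_Icc.2 hT0.le)
    rwa [sub_zero, Real.norm_eq_abs, abs_of_pos hT0] at h
  have hmoment : Λmin * ε ^ 2 ≤ T ^ 2 * Q := by
    have h := lambdaMin_secondMoment_mul_euclNorm_sq_le (integrable_mul_apply hXmeas hXbdd) v
    rw [← hTR, hΛ]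
    change lambdaMin (secondMoment μ X) * _ ≤ _
    nlinarith [sq_nonneg T]
  have hsecant : g T ≤ (1 - T) * g 0 + T * g 1 := by
    have hconv : ConvexOn ℝ univ g :=
      convexOn_logisticRisk_comp_add_smul hXmeas hymeas hy hXbdd θstar v
    simpa using hconv.2 (mem_univ 0) (mem_univ 1) (sub_nonneg.2 hT1.le) hT0.le (by ring)
  have hlhs : Λmin * ε ^ 2 / (4 * (1 + Real.exp (DX * (euclNorm θstar + ε))))
      = c / 4 * (Λmin * ε ^ 2) := by
    rw [show c = _ from sigmoid_def _, neg_neg]; field_simp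
  have hc : 0 < c := sigmoid_pos _
  have hgapT : c / 4 * (Λmin * ε ^ 2) ≤ T * (g 1 - g 0) := by
    nlinarith [mul_le_mul_of_nonneg_left hmoment hc.le]
  have hB : 0 < c / 4 * (Λmin * ε ^ 2) := by positivity
  have hpos : 0 < g 1 - g 0 := pos_of_mul_pos_right (hB.trans_le hgapT) hT0.le
  rw [hlhs, show logisticRisk μ X y θ = g 1 by simp [g, v],
    show logisticRisk μ X y θstar = g 0 by simp [g]]
  exact hgapT.trans_lt (mul_lt_of_lt_one_left hpos hT1)

/-- **Lemma (excess risk lower bound from the distance to the optimum, logistic setting).**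
If `‖θ − θ*‖ > ε` then `L(θ) − L(θ*) > Λ_min ε² / (4(1 + e^{D_X(‖θ*‖ + ε)}))`. -/
theorem logistic_excess_risk_lower_bound
    {Ω : Type*} [MeasurableSpace Ω] (μ : Measure Ω) [IsProbabilityMeasure μ]
    {d : ℕ} (hd : 1 ≤ d)
    (X : Ω → Fin d → ℝ) (y : Ω → ℝ) (hXmeas : Measurable X) (hymeas : Measurable y)
    (hy : ∀ᵐ ω ∂μ, y ω = 1 ∨ y ω = -1)
    (DX : ℝ) (hDX : 0 < DX) (hXbdd : ∀ᵐ ω ∂μ, euclNorm (X ω) ≤ DX)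
    (Λmin : ℝ) (hΛ : Λmin = lambdaMin (Matrix.of fun i j => ∫ ω, X ω i * X ω j ∂μ))
    (hΛpos : 0 < Λmin)
    (L : (Fin d → ℝ) → ℝ)
    (hL : ∀ θ, L θ = ∫ ω, Real.log (1 + Real.exp (-(y ω) * (θ ⬝ᵥ X ω))) ∂μ)
    (θstar : Fin d → ℝ) (hmin : ∀ θ, L θstar ≤ L θ)
    (ε : ℝ) (hε : 0 < ε) (θ : Fin d → ℝ) (hfar : ε < euclNorm (θ - θstar)) :
    Λmin * ε ^ 2 / (4 * (1 + Real.exp (DX * (euclNorm θstar + ε)))) < L θ - L θstar :=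
  logistic_excess_risk_lower_bound_general μ X y hXmeas hymeas hy DX hDX hXbdd Λmin hΛ hΛpos L hL
    θstar hmin ε hε θ hfar
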